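/- arXiv:2507.08993 — 4 statements merged into one kernel-verified Lean document; each statement's English description precedes it below -/
import Mathlib

section
/- For positive reals a_1,…,a_n with each a_i > 0, for any 1 ≤ i ≤ n and 1 ≤ m ≤ k−1, one has σ_{m−1}(a|i)/σ_{k−1}(a|i) ≤ σ_m(a)/σ_k(a). -/
open Finset

noncomputable def E {n : ℕ} (a : Fin n → ℝ) (m : ℕ) (s : Finset (Fin n)) : ℝ :=
  ∑ t ∈ Finset.powersetCard m s, ∏ j ∈ t, a j

lemma E_zero {n : ℕ} (a : Fin n → ℝ) (s : Finset (Fin n)) : E a 0 s = 1 := by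
  simp [E]

lemma E_insert {n : ℕ} (a : Fin n → ℝ) {x : Fin n} {s : Finset (Fin n)} (hx : x ∉ s) (m : ℕ) :
    E a (m + 1) (insert x s) = E a (m + 1) s + a x * E a m s := by
  unfold E
  rw [Finset.powersetCard_succ_insert hx, Finset.sum_union, Finset.sum_image]
  · congr 1
    rw [Finset.mul_sum]
    refine Finset.sum_congr rfl fun t ht => ?_
    rw [Finset.prod_insert (fun hxt => hx ((Finset.mem_powersetCard.1 ht).1 hxt))]
  · intro t ht u hu htu
    have hxt : x ∉ t := fun h => hx ((Finset.mem_powersetCard.1 ht).1 h)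
    have hxu : x ∉ u := fun h => hx ((Finset.mem_powersetCard.1 hu).1 h)
    have := congrArg (Finset.erase · x) htu
    simpa [Finset.erase_insert hxt, Finset.erase_insert hxu] using this
  · rw [Finset.disjoint_right]
    intro t ht ht'
    obtain ⟨u, hu, rfl⟩ := Finset.mem_image.1 ht
    exact hx ((Finset.mem_powersetCard.1 ht').1 (Finset.mem_insert_self x u))

lemma E_nonneg {n : ℕ} {a : Fin n → ℝ} (ha : ∀ j, 0 ≤ a j) (m : ℕ) (s : Finset (Fin n)) :
    0 ≤ E a m s :=
  Finset.sum_nonneg fun t _ => Finset.prod_nonneg fun j _ => ha j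

lemma E_pos {n : ℕ} {a : Fin n → ℝ} (ha : ∀ j, 0 < a j) {m : ℕ} {s : Finset (Fin n)}
    (hm : m ≤ s.card) : 0 < E a m s :=
  Finset.sum_pos (fun t _ => Finset.prod_pos fun j _ => ha j)
    (Finset.powersetCard_nonempty.2 hm)

lemma key {n : ℕ} {a : Fin n → ℝ} (ha : ∀ j, 0 ≤ a j) (s : Finset (Fin n)) :
    ∀ p q : ℕ, p ≤ q → E a p s * E a (q + 2) s ≤ E a (p + 1) s * E a (q + 1) s := by
  induction s using Finset.induction with
  | empty =>
    intro p q _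
    have h2 : E a (q + 2) (∅ : Finset (Fin n)) = 0 := by
      rw [E, Finset.powersetCard_eq_empty.2 (by simp)]; simp
    rw [h2, mul_zero]
    exact mul_nonneg (E_nonneg ha _ _) (E_nonneg ha _ _)
  | @insert x s hx ih =>
    intro p q hpq
    have hax := ha x
    have hq2 := E_insert a hx (q + 1)
    have hq1 := E_insert a hx q
    cases p with
    | zero =>
      have A := ih 0 q (Nat.zero_le q)
      rw [E_zero] at A
      have h1 := E_insert a hx 0
      rw [E_zero] at h1
      rw [E_zero]
      rw [show q + 1 + 1 = q + 2 from rfl] at hq2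
      rw [hq2, hq1, h1]
      have n1 := E_nonneg ha q s
      have n2 := E_nonneg ha (q + 1) s
      have n3 := E_nonneg ha 1 s
      nlinarith [mul_nonneg hax n1, mul_nonneg (mul_nonneg hax hax) n1]
    | succ r =>
      have A := ih (r + 1) q hpq
      have C := ih r q (le_trans (Nat.le_succ r) hpq)
      have M : E a r s * E a (q + 2) s ≤ E a (r + 2) s * E a q s := by
        rcases eq_or_lt_of_le hpq with heq | hlt
        · subst heq
          have := ih r (r + 1) (Nat.le_succ r)
          linarith [this]
        · obtain ⟨q', rfl⟩ : ∃ q', q = q' + 1 := ⟨q - 1, by omega⟩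
          have h2 := ih (r + 1) q' (by omega)
          calc E a r s * E a (q' + 1 + 2) s ≤ E a (r + 1) s * E a (q' + 1 + 1) s := C
            _ ≤ E a (r + 2) s * E a (q' + 1) s := h2
      have C' : E a r s * E a (q + 1) s ≤ E a (r + 1) s * E a q s := by
        obtain ⟨q'', rfl⟩ : ∃ q'', q = q'' + 1 := ⟨q - 1, by omega⟩
        exact ih r q'' (by omega)
      have hr1 := E_insert a hx r
      have hr2 := E_insert a hx (r + 1)
      rw [show q + 1 + 1 = q + 2 from rfl] at hq2
      rw [hq2, hq1, hr1, hr2]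
      have n1 := E_nonneg ha q s
      have n2 := E_nonneg ha (q + 1) s
      have n3 := E_nonneg ha (q + 2) s
      have n4 := E_nonneg ha r s
      have n5 := E_nonneg ha (r + 1) s
      have n6 := E_nonneg ha (r + 2) s
      nlinarith [mul_le_mul_of_nonneg_left M hax,
        mul_le_mul_of_nonneg_left C' (mul_nonneg hax hax), A]

/-- The `m`-th elementary symmetric polynomial of `a : Fin n → ℝ`. -/
noncomputable def esymm {n : ℕ} (m : ℕ) (a : Fin n → ℝ) : ℝ :=
  ∑ s ∈ Finset.powersetCard m Finset.univ, ∏ i ∈ s, a i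

/-- `σ_m(a|i)`: the `m`-th elementary symmetric polynomial of `a` with the `i`-th
entry removed. -/
noncomputable def esymmRemoved {n : ℕ} (m : ℕ) (a : Fin n → ℝ) (i : Fin n) : ℝ :=
  ∑ s ∈ Finset.powersetCard m (Finset.univ.erase i), ∏ j ∈ s, a j

/-- For positive `a₁,…,aₙ`, `2 ≤ k ≤ n`, `1 ≤ m ≤ k−1`, and any `i`:
`σ_{m−1}(a|i)/σ_{k−1}(a|i) ≤ σ_m(a)/σ_k(a)`. -/
theorem stmt2 {n k m : ℕ} (hk1 : 2 ≤ k) (hkn : k ≤ n) (hm1 : 1 ≤ m) (hmk : m ≤ k - 1)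
    (a : Fin n → ℝ) (ha : ∀ j, 0 < a j) (i : Fin n) :
    esymmRemoved (m - 1) a i / esymmRemoved (k - 1) a i ≤ esymm m a / esymm k a := by
  obtain ⟨m', rfl⟩ : ∃ m', m = m' + 1 := ⟨m - 1, by omega⟩
  obtain ⟨k', rfl⟩ : ∃ k', k = k' + 2 := ⟨k - 2, by omega⟩
  set s : Finset (Fin n) := Finset.univ.erase i with hs
  have hi : i ∉ s := Finset.notMem_erase i _
  have hins : (Finset.univ : Finset (Fin n)) = insert i s :=
    (Finset.insert_erase (Finset.mem_univ i)).symm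
  have hcard : s.card = n - 1 := by
    rw [hs, Finset.card_erase_of_mem (Finset.mem_univ i), Finset.card_univ, Fintype.card_fin]
  have hEr : ∀ j, esymmRemoved j a i = E a j s := fun j => rfl
  have hE : ∀ j, esymm j a = E a j Finset.univ := fun j => rfl
  have hden1 : 0 < esymmRemoved (k' + 2 - 1) a i := by
    rw [hEr]; exact E_pos ha (by omega)
  have hden2 : 0 < esymm (k' + 2) a := by
    rw [hE]; exact E_pos ha (by rw [Finset.card_univ, Fintype.card_fin]; omega)
  rw [div_le_div_iff₀ hden1 hden2]
  have hEk : esymm (k' + 2) a = E a (k' + 2) s + a i * E a (k' + 1) s := by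
    rw [hE, hins, E_insert a hi]
  have hEm : esymm (m' + 1) a = E a (m' + 1) s + a i * E a m' s := by
    rw [hE, hins, E_insert a hi]
  have hk : (k' + 2 - 1) = k' + 1 := rfl
  have hm : (m' + 1 - 1) = m' := rfl
  rw [hk, hm, hEr, hEr, hEk, hEm]
  have hkey := key (fun j => (ha j).le) s m' k' (by omega)
  have := mul_nonneg (ha i).le (mul_nonneg (E_nonneg (fun j => (ha j).le) m' s)
    (E_nonneg (fun j => (ha j).le) (k' + 1) s))
  nlinarith [hkey]
end

section
/- Let a = (a_1,…,a_n) be positive reals and X = (X_1,…,X_n) ∈ ℝⁿ. For the symmetric matrix M with entries M_{ij} = a_i δ_{ij} − c X_i X_j (c ∈ ℝ), one has σ_m(λ(M)) = σ_m(a) − c Σ_{i=1}^n X_i² σ_{m−1}(a|i) for every 1 ≤ m ≤ n, where σ_{m−1}(a|i) is σ_{m−1} of a with a_i deleted. -/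
open Matrix Polynomial Finset

lemma detLemma {n : ℕ} {R : Type*} [CommRing R] (d u v : Fin n → R) :
    (Matrix.of fun i j => Matrix.diagonal d i j + u i * v j).det
      = (∏ i, d i) + ∑ i, u i * v i * ∏ j ∈ Finset.univ.erase i, d j := by
  classical
  set f : (Fin n → R) [⋀^Fin n]→ₗ[R] R := Matrix.detRowAlternating with hf
  set A : Fin n → Fin n → R := fun k => d k • (Pi.single k (1 : R) : Fin n → R) with hA
  set B : Fin n → Fin n → R := fun k => u k • v with hB
  have hrows : (Matrix.of fun i j => Matrix.diagonal d i j + u i * v j) = fun i => A i + B i := by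
    funext i j
    simp [A, B, Matrix.diagonal, Pi.single_apply, eq_comm]
  have hdet : (Matrix.of fun i j => Matrix.diagonal d i j + u i * v j).det
      = f (fun i => A i + B i) := by rw [hrows]; rfl
  rw [hdet]
  have hadd : f (fun i => A i + B i) = ∑ s : Finset (Fin n), f (s.piecewise A B) := by
    have := f.toMultilinearMap.map_add_univ A B
    exact this
  rw [hadd]
  -- zero terms
  have hzero : ∀ s : Finset (Fin n), s.card + 2 ≤ n → f (s.piecewise A B) = 0 := by
    intro s hs
    have hcompl : 1 < sᶜ.card := by
      rw [Finset.card_compl, Fintype.card_fin]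
      omega
    obtain ⟨i₁, hi₁, i₂, hi₂, hne⟩ := Finset.one_lt_card.mp hcompl
    rw [Finset.mem_compl] at hi₁ hi₂
    set P := s.piecewise A B with hP
    have e₁ : P i₁ = u i₁ • v := Finset.piecewise_eq_of_notMem _ _ _ hi₁
    have e₂ : P i₂ = u i₂ • v := Finset.piecewise_eq_of_notMem _ _ _ hi₂
    have : f P = u i₁ • f (Function.update P i₁ v) := by
      conv_lhs => rw [← Function.update_eq_self i₁ P, e₁]
      exact f.toMultilinearMap.map_update_smul P i₁ (u i₁) v
    rw [this]
    have e₂' : Function.update P i₁ v i₂ = u i₂ • v := by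
      rw [Function.update_of_ne hne.symm, e₂]
    have : f (Function.update P i₁ v) = u i₂ • f (Function.update (Function.update P i₁ v) i₂ v) := by
      conv_lhs => rw [← Function.update_eq_self i₂ (Function.update P i₁ v), e₂']
      exact (f.map_update_smul _ i₂ (u i₂) v)
    rw [this]
    have hzz : f (Function.update (Function.update P i₁ v) i₂ v) = 0 := by
      apply f.map_eq_zero_of_eq _ (i := i₁) (j := i₂) _ hne
      rw [Function.update_of_ne hne, Function.update_self, Function.update_self]
    rw [hzz, smul_zero, smul_zero]
  -- the diagonal term
  have huniv : f (Finset.univ.piecewise A B) = ∏ i, d i := by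
    rw [Finset.piecewise_univ]
    have hsm : f A = (∏ i, d i) • f (fun k => (Pi.single k (1 : R) : Fin n → R)) :=
      f.toMultilinearMap.map_smul_univ d (fun k => (Pi.single k (1 : R) : Fin n → R))
    rw [hsm]
    have h1 : f (fun k => (Pi.single k (1 : R) : Fin n → R)) = (1 : Matrix (Fin n) (Fin n) R).det := by
      congr 1
      funext i j
      simp [Matrix.one_apply, Pi.single_apply, eq_comm]
    rw [h1, Matrix.det_one, smul_eq_mul, mul_one]
  -- the erase terms
  have herase : ∀ i : Fin n, f ((Finset.univ.erase i).piecewise A B)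
      = u i * v i * ∏ j ∈ Finset.univ.erase i, d j := by
    intro i
    rw [Finset.piecewise_erase_univ]
    have hB' : B i = u i • v := rfl
    rw [hB', f.map_update_smul A i (u i) v]
    have hv : v = ∑ j, v j • (Pi.single j (1 : R) : Fin n → R) := by
      funext k; simp [Pi.single_apply]
    have hslot : f (Function.update A i v) = v i * ∏ j ∈ Finset.univ.erase i, d j := by
      conv_lhs => rw [hv]
      rw [f.map_update_sum Finset.univ i (fun j => v j • (Pi.single j (1 : R) : Fin n → R)) A]
      have hterm : ∀ j : Fin n,
          f (Function.update A i (v j • (Pi.single j (1 : R) : Fin n → R)))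
            = if j = i then v i * ∏ k ∈ Finset.univ.erase i, d k else 0 := by
        intro j
        rw [f.map_update_smul A i (v j) _]
        by_cases hji : j = i
        · subst hji
          have hupd : Function.update A j (Pi.single j (1 : R) : Fin n → R)
              = fun k => (Function.update d j 1) k • (Pi.single k (1 : R) : Fin n → R) := by
            funext k
            by_cases hk : k = j
            · subst hk; simp
            · simp [Function.update_of_ne hk, A]
          rw [hupd]
          have hsm : f (fun k => (Function.update d j 1) k • (Pi.single k (1 : R) : Fin n → R))
              = (∏ k, Function.update d j 1 k) • f (fun k => (Pi.single k (1 : R) : Fin n → R)) :=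
            f.toMultilinearMap.map_smul_univ _ _
          rw [hsm]
          have h1 : f (fun k => (Pi.single k (1 : R) : Fin n → R))
              = (1 : Matrix (Fin n) (Fin n) R).det := by
            congr 1
            funext i' j'
            simp [Matrix.one_apply, Pi.single_apply, eq_comm]
          rw [h1, Matrix.det_one, if_pos rfl, Finset.prod_update_of_mem (Finset.mem_univ j)]
          simp [Finset.sdiff_singleton_eq_erase]
        · rw [if_neg hji]
          set Y := Function.update A i (Pi.single j (1 : R) : Fin n → R) with hY
          have h2 : Y j = d j • (Pi.single j (1 : R) : Fin n → R) := by
            rw [hY, Function.update_of_ne hji]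
          have h3 : f Y = d j • f (Function.update Y j (Pi.single j (1 : R) : Fin n → R)) := by
            conv_lhs => rw [← Function.update_eq_self j Y, h2]
            exact f.map_update_smul Y j (d j) _
          rw [h3]
          have h4 : f (Function.update Y j (Pi.single j (1 : R) : Fin n → R)) = 0 := by
            apply f.map_eq_zero_of_eq _ (i := i) (j := j) _ (Ne.symm hji)
            rw [Function.update_of_ne (Ne.symm hji), Function.update_self, hY,
              Function.update_self]
          rw [h4, smul_zero, smul_zero]
      rw [Finset.sum_congr rfl (fun j _ => hterm j), Finset.sum_ite_eq' Finset.univ i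
        (fun _ => v i * ∏ k ∈ Finset.univ.erase i, d k), if_pos (Finset.mem_univ i)]
    rw [hslot, smul_eq_mul, mul_assoc]
  -- assemble
  classical
  set T : Finset (Finset (Fin n)) :=
    insert Finset.univ (Finset.univ.image (fun i : Fin n => Finset.univ.erase i)) with hT
  have hsub : ∀ s ∈ (Finset.univ : Finset (Finset (Fin n))), s ∉ T → f (s.piecewise A B) = 0 := by
    intro s _ hs
    apply hzero
    by_contra hcard
    push_neg at hcard
    have hle : s.card ≤ n := by simpa using Finset.card_le_univ s
    rcases (by omega : s.card = n ∨ s.card + 1 = n) with h1 | h1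
    · have : s = Finset.univ := Finset.eq_univ_of_card s (by simpa using h1)
      exact hs (this ▸ Finset.mem_insert_self _ _)
    · have hc1 : sᶜ.card = 1 := by rw [Finset.card_compl, Fintype.card_fin]; omega
      obtain ⟨i, hi⟩ := Finset.card_eq_one.mp hc1
      have hse : s = Finset.univ.erase i := by
        rw [← compl_compl s, hi, Finset.compl_singleton]
      exact hs (hse ▸ Finset.mem_insert_of_mem (Finset.mem_image_of_mem _ (Finset.mem_univ i)))
  rw [← Finset.sum_subset (Finset.subset_univ T) hsub]
  have hnotmem : Finset.univ ∉ Finset.univ.image (fun i : Fin n => Finset.univ.erase i) := by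
    intro h
    obtain ⟨i, -, hi⟩ := Finset.mem_image.mp h
    have : i ∈ Finset.univ.erase i := hi.symm ▸ Finset.mem_univ i
    exact (Finset.notMem_erase i _) this
  have hinj : ∀ i i' : Fin n, Finset.univ.erase i = Finset.univ.erase i' → i = i' := by
    intro i i' h
    by_contra hne
    have : i ∈ Finset.univ.erase i' := Finset.mem_erase.mpr ⟨hne, Finset.mem_univ i⟩
    rw [← h] at this
    exact (Finset.notMem_erase i _) this
  rw [hT, Finset.sum_insert hnotmem, Finset.sum_image (fun i hi i' hi' h => hinj i i' h),
    huniv]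
  congr 1
  exact Finset.sum_congr rfl fun i _ => herase i


lemma charpoly_hermitian_eq_prod {n : ℕ} {M : Matrix (Fin n) (Fin n) ℝ}
    (hM : M.IsHermitian) :
    M.charpoly = ∏ i, (X - C (hM.eigenvalues i)) := by
  classical
  set V : Matrix (Fin n) (Fin n) ℝ := (Matrix.IsHermitian.eigenvectorUnitary hM : Matrix (Fin n) (Fin n) ℝ) with hV
  have hVs : V * star V = 1 := by
    have h := (Matrix.IsHermitian.eigenvectorUnitary hM).prop
    rw [Matrix.mem_unitaryGroup_iff] at h
    exact h
  have hsp : M = V * Matrix.diagonal hM.eigenvalues * star V := by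
    convert hM.spectral_theorem using 2
    rw [Unitary.conjStarAlgAut_apply]; rfl
  -- charmatrix conj
  have hmap1 : (V.map C) * ((star V).map C) = 1 := by
    rw [← Matrix.map_mul, hVs, Matrix.map_one C (map_zero C) (map_one C)]
  have e1 : V.map C * (Matrix.scalar (Fin n) (X : ℝ[X])) * (star V).map C
      = Matrix.scalar (Fin n) (X : ℝ[X]) := by
    rw [← (Matrix.scalar_commute (X : ℝ[X]) (fun r' => Commute.all _ _) (V.map C)).eq,
      Matrix.mul_assoc, hmap1, Matrix.mul_one]
  have e2 : V.map C * ((Matrix.diagonal hM.eigenvalues).map C) * (star V).map C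
      = M.map C := by
    conv_rhs => rw [hsp, Matrix.map_mul, Matrix.map_mul]
  have key : charmatrix M
      = (V.map C) * charmatrix (Matrix.diagonal hM.eigenvalues) * ((star V).map C) := by
    rw [charmatrix, charmatrix, RingHom.mapMatrix_apply, RingHom.mapMatrix_apply, mul_sub,
      sub_mul, e1, e2]
  have hdetD : (charmatrix (Matrix.diagonal hM.eigenvalues)).det
      = ∏ i, (X - C (hM.eigenvalues i)) := by
    have : charmatrix (Matrix.diagonal hM.eigenvalues)
        = Matrix.diagonal (fun i => X - C (hM.eigenvalues i)) := by
      ext i j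
      by_cases h : i = j
      · subst h; simp
      · simp [charmatrix_apply_ne _ _ _ h, Matrix.diagonal_apply_ne _ h]
    rw [this, Matrix.det_diagonal]
  rw [Matrix.charpoly, key, Matrix.det_mul, Matrix.det_mul, hdetD]
  have : (V.map C).det * ((star V).map C).det = 1 := by
    rw [← Matrix.det_mul, hmap1, Matrix.det_one]
  calc (V.map C).det * (∏ i, (X - C (hM.eigenvalues i))) * ((star V).map C).det
      = ((V.map C).det * ((star V).map C).det) * ∏ i, (X - C (hM.eigenvalues i)) := by ring
    _ = ∏ i, (X - C (hM.eigenvalues i)) := by rw [this, one_mul]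


lemma coeff_prod_X_sub_C {n : ℕ} (g : Fin n → ℝ) (s : Finset (Fin n)) {k : ℕ} (h : k ≤ s.card) :
    (∏ i ∈ s, (X - C (g i))).coeff k
      = (-1 : ℝ) ^ (s.card - k) * ∑ t ∈ Finset.powersetCard (s.card - k) s, ∏ i ∈ t, g i := by
  have h0 := Multiset.prod_X_sub_C_coeff (s.val.map g) (k := k) (by simpa using h)
  rw [Multiset.map_map, Multiset.card_map] at h0
  rw [Finset.esymm_map_val] at h0
  have e1 : (∏ i ∈ s, (X - C (g i))) = (Multiset.map ((fun t => X - C t) ∘ g) s.val).prod := rfl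
  have e2 : (∑ t ∈ Finset.powersetCard (s.card - k) s, ∏ i ∈ t, g i)
      = (s.powersetCard (s.card - k)).sum fun t => t.prod g := rfl
  rw [e1, e2]
  exact h0




/-- Rank-one perturbation formula: for `M_{ij} = aᵢ δ_{ij} − c Xᵢ Xⱼ` with `aᵢ > 0`,
`σ_m(λ(M)) = σ_m(a) − c Σᵢ Xᵢ² σ_{m−1}(a|i)` for every `1 ≤ m ≤ n`. -/
theorem stmt4 {n : ℕ} (a X : Fin n → ℝ) (ha : ∀ i, 0 < a i) (c : ℝ)
    (M : Matrix (Fin n) (Fin n) ℝ)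
    (hMdef : ∀ i j, M i j = (if i = j then a i else 0) - c * X i * X j)
    (hM : M.IsHermitian) :
    ∀ m, 1 ≤ m → m ≤ n →
      esymm m hM.eigenvalues
        = esymm m a - c * ∑ i, X i ^ 2 * esymmRemoved (m - 1) a i := by
  intro m hm1 hmn
  classical
  -- charpoly via detLemma
  have hcm : charmatrix M = Matrix.of fun i j =>
      Matrix.diagonal (fun i => (Polynomial.X : ℝ[X]) - C (a i)) i j
        + (C c * C (X i)) * C (X j) := by
    ext i j : 2
    by_cases h : i = j
    · subst h
      rw [charmatrix_apply_eq, hMdef]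
      simp only [if_pos rfl, Matrix.of_apply, Matrix.diagonal_apply_eq]
      simp only [map_sub, _root_.map_mul, if_true]
      congr 1
      ring
    · rw [charmatrix_apply_ne _ _ _ h, hMdef]
      simp only [if_neg h, Matrix.of_apply, Matrix.diagonal_apply_ne _ h]
      simp only [map_sub, _root_.map_mul, map_zero]
      congr 1
      ring
  have hchar : M.charpoly = (∏ i, ((Polynomial.X : ℝ[X]) - C (a i)))
      + ∑ i, (C c * C (X i)) * C (X i)
          * ∏ j ∈ Finset.univ.erase i, ((Polynomial.X : ℝ[X]) - C (a j)) := by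
    rw [Matrix.charpoly, hcm, detLemma]
  have hchar2 : M.charpoly = ∏ i, ((Polynomial.X : ℝ[X]) - C (hM.eigenvalues i)) :=
    charpoly_hermitian_eq_prod hM
  -- take coefficients at n - m
  have hc := congrArg (fun p => Polynomial.coeff p (n - m)) (hchar2.symm.trans hchar)
  simp only [Polynomial.coeff_add, Polynomial.finset_sum_coeff] at hc
  have hlhs : (∏ i, ((Polynomial.X : ℝ[X]) - C (hM.eigenvalues i))).coeff (n - m)
      = (-1 : ℝ) ^ m * esymm m hM.eigenvalues := by
    have h0 := coeff_prod_X_sub_C hM.eigenvalues Finset.univ (k := n - m)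
      (by simpa using Nat.sub_le n m)
    rw [Finset.card_univ, Fintype.card_fin] at h0
    rw [h0, (show n - (n - m) = m by omega)]
    rfl
  have hr1 : (∏ i, ((Polynomial.X : ℝ[X]) - C (a i))).coeff (n - m)
      = (-1 : ℝ) ^ m * esymm m a := by
    have h0 := coeff_prod_X_sub_C a Finset.univ (k := n - m)
      (by simpa using Nat.sub_le n m)
    rw [Finset.card_univ, Fintype.card_fin] at h0
    rw [h0, (show n - (n - m) = m by omega)]
    rfl
  have hr2 : ∀ i : Fin n,
      ((C c * C (X i)) * C (X i)
        * ∏ j ∈ Finset.univ.erase i, ((Polynomial.X : ℝ[X]) - C (a j))).coeff (n - m)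
      = c * X i ^ 2 * ((-1 : ℝ) ^ (m - 1) * esymmRemoved (m - 1) a i) := by
    intro i
    have hcard : (Finset.univ.erase i).card = n - 1 := by
      rw [Finset.card_erase_of_mem (Finset.mem_univ i)]
      simp
    have hkey := coeff_prod_X_sub_C a (Finset.univ.erase i) (k := n - m)
      (by rw [hcard]; omega)
    rw [← C_mul, ← C_mul, Polynomial.coeff_C_mul, hkey, hcard]
    have : n - 1 - (n - m) = m - 1 := by omega
    rw [this]
    simp only [esymmRemoved]
    ring
  rw [hlhs, hr1] at hc
  rw [Finset.sum_congr rfl (fun i _ => hr2 i)] at hc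
  -- remove signs
  obtain ⟨k, rfl⟩ : ∃ k, m = k + 1 := ⟨m - 1, by omega⟩
  simp only [Nat.add_sub_cancel] at hc ⊢
  have hpow : ((-1 : ℝ)) ^ (k + 1) = -(-1 : ℝ) ^ k := by rw [pow_succ]; ring
  rw [hpow] at hc
  have hne : ((-1 : ℝ)) ^ k ≠ 0 := by positivity
  apply mul_left_cancel₀ (neg_ne_zero.mpr hne)
  have hsum : ∑ x, c * X x ^ 2 * ((-1 : ℝ) ^ k * esymmRemoved k a x)
      = (-1 : ℝ) ^ k * (c * ∑ x, X x ^ 2 * esymmRemoved k a x) := by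
    rw [Finset.mul_sum, Finset.mul_sum]
    exact Finset.sum_congr rfl fun x _ => by ring
  linear_combination hc + hsum
end

section
/- Let Q(a) be the n×n symmetric matrix with fixed entries d_2,…,d_{n−1} on the diagonal positions 2..n−1, off-diagonal first-row entries a_2,…,a_{n−1}, entry (1,1) equal to d_1 + aX², entries (1,n) = (n,1) = −aXY, entry (n,n) = aY², and zeros elsewhere. If X² + Y² > 0, then as a → +∞ the largest eigenvalue of Q(a) equals a(X² + Y² + O(1/a)), and the remaining n−1 eigenvalues converge to the n−1 roots of the limiting degree-(n−1) polynomial f_∞(λ) (depending only on d_1,…,d_{n−1}, X, Y, a_2,…,a_{n−1}); in particular they remain bounded as a → ∞. -/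
open Matrix

/-- Pointwise quadratic-form bound by the sum of absolute values of entries. -/
lemma aux_qf_bound {n : ℕ} (M : Matrix (Fin n) (Fin n) ℝ) (z : Fin n → ℝ) :
    |z ⬝ᵥ (M *ᵥ z)| ≤ (∑ i, ∑ j, |M i j|) * (z ⬝ᵥ z) := by
  have hzz : ∀ i j : Fin n, |z i * z j| ≤ z ⬝ᵥ z := by
    intro i j
    have h1 : z i * z i ≤ z ⬝ᵥ z := by
      refine Finset.single_le_sum (f := fun k => z k * z k) (fun k _ => mul_self_nonneg _)
        (Finset.mem_univ i)
    have h2 : z j * z j ≤ z ⬝ᵥ z := by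
      refine Finset.single_le_sum (f := fun k => z k * z k) (fun k _ => mul_self_nonneg _)
        (Finset.mem_univ j)
    have := abs_mul (z i) (z j)
    nlinarith [sq_nonneg (|z i| - |z j|), sq_abs (z i), sq_abs (z j), abs_nonneg (z i * z j)]
  have hexp : z ⬝ᵥ (M *ᵥ z) = ∑ i, ∑ j, z i * (M i j * z j) := by
    simp [dotProduct, Matrix.mulVec, Finset.mul_sum]
  rw [hexp]
  calc |∑ i, ∑ j, z i * (M i j * z j)| ≤ ∑ i, |∑ j, z i * (M i j * z j)| :=
        Finset.abs_sum_le_sum_abs _ _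
    _ ≤ ∑ i, ∑ j, |z i * (M i j * z j)| :=
        Finset.sum_le_sum fun i _ => Finset.abs_sum_le_sum_abs _ _
    _ ≤ ∑ i, ∑ j, |M i j| * (z ⬝ᵥ z) := by
        refine Finset.sum_le_sum fun i _ => Finset.sum_le_sum fun j _ => ?_
        have : |z i * (M i j * z j)| = |M i j| * |z i * z j| := by
          rw [show z i * (M i j * z j) = M i j * (z i * z j) by ring, abs_mul]
        rw [this]
        exact mul_le_mul_of_nonneg_left (hzz i j) (abs_nonneg _)
    _ = (∑ i, ∑ j, |M i j|) * (z ⬝ᵥ z) := by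
        rw [Finset.sum_mul]; exact Finset.sum_congr rfl fun i _ => by rw [Finset.sum_mul]

set_option maxHeartbeats 1000000 in
/-- Eigenvalue asymptotics for the matrix `Q(a)` from the proof of Proposition 2.1
(following Lemma 1.2 of Caffarelli–Nirenberg–Spruck): `Q(a)` is symmetric with
`Q₁₁ = d₁ + aX²`, `Q_{nn} = aY²`, `Q_{1n} = Q_{n1} = −aXY`, diagonal entries
`d₂,…,d_{n−1}`, first-row/column entries `a₂,…,a_{n−1}`, zeros elsewhere.
If `X² + Y² > 0`, then as `a → +∞` one eigenvalue equals `a(X² + Y² + O(1/a))`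
and the remaining `n−1` eigenvalues remain bounded. -/
theorem stmt9 {n : ℕ} (hn : 3 ≤ n) (d v : Fin n → ℝ) (X Y : ℝ)
    (hXY : 0 < X ^ 2 + Y ^ 2)
    (Q : ℝ → Matrix (Fin n) (Fin n) ℝ)
    (hQ : ∀ t i j, Q t i j =
      if i = j then
        (if (i : ℕ) = 0 then d i + t * X ^ 2
         else if (i : ℕ) = n - 1 then t * Y ^ 2 else d i)
      else if (i : ℕ) = 0 then
        (if (j : ℕ) = n - 1 then -t * X * Y else v j)
      else if (j : ℕ) = 0 then
        (if (i : ℕ) = n - 1 then -t * X * Y else v i)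
      else 0) :
    ∃ C > (0 : ℝ), ∃ A0 : ℝ, ∀ a : ℝ, A0 ≤ a → ∀ hH : (Q a).IsHermitian,
      ∃ i0 : Fin n, |hH.eigenvalues i0 - a * (X ^ 2 + Y ^ 2)| ≤ C ∧
        ∀ i : Fin n, i ≠ i0 → |hH.eigenvalues i| ≤ C := by
  classical
  set S : ℝ := X ^ 2 + Y ^ 2 with hS
  set w : Fin n → ℝ := fun i => if (i : ℕ) = 0 then X else if (i : ℕ) = n - 1 then -Y else 0
    with hw
  -- decomposition Q t = Q 0 + t • w wᵀ
  have hn1 : ¬ (n - 1 = 0) := by omega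
  have hdecomp : ∀ t : ℝ, Q t = Q 0 + t • Matrix.vecMulVec w w := by
    intro t
    ext i j
    simp only [Matrix.add_apply, Matrix.smul_apply, Matrix.vecMulVec_apply, hQ, smul_eq_mul, hw]
    by_cases hij : i = j
    · subst hij
      by_cases h0 : (i : ℕ) = 0
      · have h2 : ¬ (i : ℕ) = n - 1 := by omega
        simp only [eq_self_iff_true, if_true, if_pos h0, if_neg h2]
        ring
      · by_cases h1 : (i : ℕ) = n - 1
        · simp only [eq_self_iff_true, if_true, if_neg h0, if_pos h1]
          ring
        · simp only [eq_self_iff_true, if_true, if_neg h0, if_neg h1]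
          ring
    · have hvij : ¬ ((i : ℕ) = 0 ∧ (j : ℕ) = 0) := by
        rintro ⟨a1, a2⟩; exact hij (Fin.ext (a1.trans a2.symm))
      have hvij2 : ¬ ((i : ℕ) = n - 1 ∧ (j : ℕ) = n - 1) := by
        rintro ⟨a1, a2⟩; exact hij (Fin.ext (a1.trans a2.symm))
      simp only [if_neg hij]
      by_cases h0 : (i : ℕ) = 0
      · have hj0 : ¬ (j : ℕ) = 0 := fun hj => hvij ⟨h0, hj⟩
        by_cases h1 : (j : ℕ) = n - 1
        · simp only [if_pos h0, if_pos h1, if_neg hj0]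
          ring
        · simp only [if_pos h0, if_neg h1, if_neg hj0]
          ring
      · by_cases hj0 : (j : ℕ) = 0
        · by_cases h1 : (i : ℕ) = n - 1
          · simp only [if_neg h0, if_pos hj0, if_pos h1]
            ring
          · simp only [if_neg h0, if_pos hj0, if_neg h1]
            ring
        · by_cases h1 : (i : ℕ) = n - 1 <;> by_cases h2 : (j : ℕ) = n - 1
          · exact absurd ⟨h1, h2⟩ hvij2
          · simp [h0, hj0, h1, h2]
          · simp [h0, hj0, h1, h2]
          · simp [h0, hj0, h1, h2]
  -- the rank-one vector has squared norm S
  have hwS : w ⬝ᵥ w = S := by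
    have hptw : ∀ i : Fin n, w i * w i =
        (if i = (⟨0, by omega⟩ : Fin n) then X ^ 2 else 0) +
        (if i = (⟨n - 1, by omega⟩ : Fin n) then Y ^ 2 else 0) := by
      intro i
      by_cases h0 : (i : ℕ) = 0
      · have h2 : ¬ (i : ℕ) = n - 1 := by omega
        rw [if_pos (Fin.ext h0), if_neg (fun h => h2 (by rw [h]))]
        simp only [hw]
        rw [if_pos h0]
        ring
      · by_cases h1 : (i : ℕ) = n - 1
        · rw [if_neg (fun h => h0 (by rw [h])), if_pos (Fin.ext h1)]
          simp only [hw]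
          rw [if_neg h0, if_pos h1]
          ring
        · rw [if_neg (fun h => h0 (by rw [h])), if_neg (fun h => h1 (by rw [h]))]
          simp only [hw]
          rw [if_neg h0, if_neg h1]
          ring
    have h1 : w ⬝ᵥ w = ∑ i, w i * w i := rfl
    rw [h1, Finset.sum_congr rfl fun i _ => hptw i, Finset.sum_add_distrib]
    simp [Finset.sum_ite_eq', hS]
  -- constants
  set C₀ : ℝ := ∑ i, ∑ j, |Q 0 i j| with hC₀
  have hC₀0 : 0 ≤ C₀ := Finset.sum_nonneg fun i _ => Finset.sum_nonneg fun j _ => abs_nonneg _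
  set T : ℝ := Matrix.trace (Q 0) with hT
  refine ⟨C₀ + (n : ℝ) * C₀ + |T| + 1, by positivity, ((n : ℝ) * C₀ + |T| + 1) / S, ?_⟩
  intro a ha hH
  have haS : (n : ℝ) * C₀ + |T| + 1 ≤ a * S := by
    rw [div_le_iff₀ hXY] at ha
    exact ha
  have ha0 : 0 ≤ a := by
    nlinarith [abs_nonneg T, Nat.cast_nonneg (α := ℝ) n]
  set lam := hH.eigenvalues with hlam
  obtain ⟨u, hu⟩ : ∃ u : Fin n → Fin n → ℝ, ∀ i, u i = ⇑(hH.eigenvectorBasis i) :=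
    ⟨fun i => ⇑(hH.eigenvectorBasis i), fun i => rfl⟩
  -- eigenvector equation
  have heig : ∀ i, Q a *ᵥ u i = lam i • u i := by
    intro i; rw [hu i]; exact hH.mulVec_eigenvectorBasis i
  -- orthonormality in dot-product form
  have horth : ∀ i j, u i ⬝ᵥ u j = if i = j then 1 else 0 := by
    intro i j
    have h := (orthonormal_iff_ite.mp hH.eigenvectorBasis.orthonormal) i j
    have h2 : (inner ℝ (hH.eigenvectorBasis i) (hH.eigenvectorBasis j) : ℝ) =
        u i ⬝ᵥ u j := by
      rw [hu i, hu j]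
      simp [PiLp.inner_apply, RCLike.inner_apply, dotProduct, mul_comm]
    rw [← h2, h]
  -- quadratic form decomposition
  have hqf : ∀ z : Fin n → ℝ, z ⬝ᵥ (Q a *ᵥ z) = z ⬝ᵥ (Q 0 *ᵥ z) + a * (w ⬝ᵥ z) ^ 2 := by
    intro z
    have hrk : Matrix.vecMulVec w w *ᵥ z = (w ⬝ᵥ z) • w := by
      ext i
      simp only [Matrix.mulVec, Matrix.vecMulVec_apply, dotProduct, Pi.smul_apply,
        smul_eq_mul, Finset.mul_sum, mul_assoc]
      rw [Finset.sum_mul]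
      exact Finset.sum_congr rfl fun x _ => by ring
    rw [hdecomp a, Matrix.add_mulVec, Matrix.smul_mulVec, hrk, dotProduct_add,
      dotProduct_smul]
    have : z ⬝ᵥ ((w ⬝ᵥ z) • w) = (w ⬝ᵥ z) * (z ⬝ᵥ w) := by
      rw [dotProduct_smul]; rfl
    rw [smul_eq_mul, this, dotProduct_comm z w]
    ring
  have hqf0 : ∀ z : Fin n → ℝ, |z ⬝ᵥ (Q 0 *ᵥ z)| ≤ C₀ * (z ⬝ᵥ z) := fun z =>
    aux_qf_bound (Q 0) z
  have huu : ∀ i, u i ⬝ᵥ u i = 1 := by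
    intro i; have := horth i i; simpa using this
  -- each eigenvalue equals its Rayleigh quotient
  have hray : ∀ i, lam i = u i ⬝ᵥ (Q 0 *ᵥ u i) + a * (w ⬝ᵥ u i) ^ 2 := by
    intro i
    have h1 : u i ⬝ᵥ (Q a *ᵥ u i) = lam i := by
      rw [heig i, dotProduct_smul, huu i]
      simp
    rw [← h1, hqf (u i)]
  -- lower bound for all eigenvalues
  have hlow : ∀ i, -C₀ ≤ lam i := by
    intro i
    have h1 := hqf0 (u i)
    rw [huu i, mul_one] at h1
    have h2 : 0 ≤ a * (w ⬝ᵥ u i) ^ 2 := by positivity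
    have := abs_le.mp h1
    rw [hray i]; linarith [this.1]
  -- at most one eigenvalue exceeds C₀
  have hone : ∀ i j, i ≠ j → C₀ < lam i → lam j ≤ C₀ := by
    intro i j hij hbig
    by_contra hbj
    push_neg at hbj
    set p : ℝ := w ⬝ᵥ u i with hp
    set q : ℝ := w ⬝ᵥ u j with hq
    set z : Fin n → ℝ := q • u i - p • u j with hz
    have hwz : w ⬝ᵥ z = 0 := by
      simp only [hz, dotProduct_sub, dotProduct_smul, smul_eq_mul, ← hp, ← hq]
      ring
    have hzz : z ⬝ᵥ z = q ^ 2 + p ^ 2 := by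
      simp only [hz, dotProduct_sub, sub_dotProduct, dotProduct_smul,
        smul_dotProduct, smul_eq_mul]
      rw [huu i, huu j]
      have h1 := horth i j
      have h2 := horth j i
      rw [if_neg hij] at h1
      rw [if_neg (Ne.symm hij)] at h2
      rw [h1, h2]; ring
    have hQz : z ⬝ᵥ (Q a *ᵥ z) = q ^ 2 * lam i + p ^ 2 * lam j := by
      have hmv : Q a *ᵥ z = q • (lam i • u i) - p • (lam j • u j) := by
        simp only [hz, Matrix.mulVec_sub, Matrix.mulVec_smul, heig]
      rw [hmv]
      simp only [hz, dotProduct_sub, sub_dotProduct, dotProduct_smul,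
        smul_dotProduct, smul_eq_mul]
      rw [huu i, huu j]
      have h1 := horth i j
      have h2 := horth j i
      rw [if_neg hij] at h1
      rw [if_neg (Ne.symm hij)] at h2
      rw [h1, h2]; ring
    have hle : q ^ 2 * lam i + p ^ 2 * lam j ≤ C₀ * (q ^ 2 + p ^ 2) := by
      rw [← hQz, ← hzz]
      have := hqf z
      rw [hwz] at this
      simp only [ne_eq, OfNat.ofNat_ne_zero, not_false_eq_true, zero_pow, mul_zero, add_zero]
        at this
      rw [this]
      exact le_trans (le_abs_self _) (hqf0 z)
    have hA : 0 ≤ (lam j - C₀) * p ^ 2 := mul_nonneg (by linarith) (sq_nonneg p)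
    have hB : 0 ≤ (lam i - C₀) * q ^ 2 := mul_nonneg (by linarith) (sq_nonneg q)
    have hq0 : q = 0 := by
      by_contra hqq
      have h4 : 0 < q ^ 2 := by positivity
      nlinarith [mul_pos (sub_pos.mpr hbig) h4]
    have hp0 : p = 0 := by
      by_contra hpp
      have h4 : 0 < p ^ 2 := by positivity
      nlinarith [mul_pos (sub_pos.mpr hbj) h4]
    have hcon : lam i ≤ C₀ := by
      have h1 := hqf0 (u i)
      rw [huu i, mul_one] at h1
      have h2 := (abs_le.mp h1).2
      rw [hray i, ← hp, hp0]
      simpa using h2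
    exact absurd hcon (not_le.mpr hbig)
  -- trace identity
  have htr : ∑ i, lam i = T + a * S := by
    have h1 : Matrix.trace ((star (hH.eigenvectorUnitary : Matrix (Fin n) (Fin n) ℝ)) * Q a *
        (hH.eigenvectorUnitary : Matrix (Fin n) (Fin n) ℝ)) = ∑ i, lam i := by
      rw [Matrix.trace_mul_cycle, Matrix.mem_unitaryGroup_iff.mp hH.eigenvectorUnitary.2,
        Matrix.one_mul, hH.trace_eq_sum_eigenvalues]
      simp [hlam]
    have h2 : Matrix.trace ((star (hH.eigenvectorUnitary : Matrix (Fin n) (Fin n) ℝ)) * Q a *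
        (hH.eigenvectorUnitary : Matrix (Fin n) (Fin n) ℝ)) = Matrix.trace (Q a) := by
      rw [Matrix.trace_mul_cycle, Matrix.mem_unitaryGroup_iff.mp hH.eigenvectorUnitary.2,
        Matrix.one_mul]
    have h3 : Matrix.trace (Q a) = T + a * S := by
      rw [hdecomp a, Matrix.trace_add, Matrix.trace_smul, ← hT]
      congr 1
      have : Matrix.trace (Matrix.vecMulVec w w) = w ⬝ᵥ w := by
        simp [Matrix.trace, Matrix.diag, Matrix.vecMulVec_apply, dotProduct]
      rw [this, hwS, smul_eq_mul]
    rw [← h1, h2, h3]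
  -- pick the largest eigenvalue
  obtain ⟨i0, -, hmax⟩ := Finset.exists_max_image Finset.univ lam
    ⟨⟨0, by omega⟩, Finset.mem_univ _⟩
  have hmax' : ∀ i, lam i ≤ lam i0 := fun i => hmax i (Finset.mem_univ i)
  -- the largest eigenvalue is big
  have hbig : C₀ < lam i0 := by
    by_contra hc
    push_neg at hc
    have hsum : ∑ i, lam i ≤ (n : ℝ) * C₀ := by
      calc ∑ i, lam i ≤ ∑ _i : Fin n, C₀ :=
            Finset.sum_le_sum fun i _ => le_trans (hmax' i) hc
        _ = (n : ℝ) * C₀ := by simp [mul_comm]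
    rw [htr] at hsum
    have : -|T| ≤ T := neg_abs_le T
    linarith
  -- bounds for the other eigenvalues
  have hother : ∀ i, i ≠ i0 → |lam i| ≤ C₀ := by
    intro i hi
    rw [abs_le]
    exact ⟨hlow i, hone i0 i (Ne.symm hi) hbig⟩
  refine ⟨i0, ?_, fun i hi => le_trans (hother i hi) (by linarith [abs_nonneg T, mul_nonneg (Nat.cast_nonneg (α := ℝ) n) hC₀0])⟩
  -- main estimate via the trace
  have hsplit : lam i0 + ∑ i ∈ Finset.univ.erase i0, lam i = ∑ i, lam i :=
    Finset.add_sum_erase _ _ (Finset.mem_univ i0)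
  have herase : |∑ i ∈ Finset.univ.erase i0, lam i| ≤ (n : ℝ) * C₀ := by
    calc |∑ i ∈ Finset.univ.erase i0, lam i| ≤ ∑ i ∈ Finset.univ.erase i0, |lam i| :=
          Finset.abs_sum_le_sum_abs _ _
      _ ≤ ∑ _i ∈ Finset.univ.erase i0, C₀ :=
          Finset.sum_le_sum fun i hi => hother i (Finset.ne_of_mem_erase hi)
      _ = ((Finset.univ.erase i0).card : ℝ) * C₀ := by
          rw [Finset.sum_const, nsmul_eq_mul]
      _ ≤ (n : ℝ) * C₀ := by
          refine mul_le_mul_of_nonneg_right ?_ hC₀0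
          exact_mod_cast le_trans (Finset.card_erase_le) (by simp)
  have h1 : lam i0 - a * S = T - ∑ i ∈ Finset.univ.erase i0, lam i := by
    rw [htr] at hsplit; linarith
  rw [h1]
  calc |T - ∑ i ∈ Finset.univ.erase i0, lam i|
      ≤ |T| + |∑ i ∈ Finset.univ.erase i0, lam i| := by
        rw [sub_eq_add_neg]
        refine (abs_add_le _ _).trans ?_
        rw [abs_neg]
    _ ≤ C₀ + (n : ℝ) * C₀ + |T| + 1 := by linarith [herase, hC₀0]
end

section
/- Let λ ∈ Γ_k ⊂ ℝⁿ with 1 ≤ m ≤ k. Then σ_m(λ)/C(n,m) ≥ (σ_k(λ)/C(n,k))^{m/k}, where C(n,j) is the binomial coefficient (Maclaurin's inequality on Γ_k). -/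
open Polynomial Finset

lemma esymm_zero' {n : ℕ} (a : Fin n → ℝ) : esymm 0 a = 1 := by simp [esymm]

lemma esymm_one' {n : ℕ} (a : Fin n → ℝ) : esymm 1 a = ∑ i, a i := by
  simp [esymm, Finset.powersetCard_one]

lemma esymm_top {n : ℕ} (a : Fin n → ℝ) : esymm n a = ∏ i, a i := by
  have h : Finset.powersetCard n (Finset.univ : Finset (Fin n)) = {Finset.univ} := by
    have := Finset.powersetCard_self (Finset.univ : Finset (Fin n))
    simpa using this
  simp [esymm, h]

lemma esymm_coeff {n : ℕ} (a : Fin n → ℝ) {k : ℕ} (h : k ≤ n) :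
    (∏ i, (X + C (a i))).coeff k = esymm (n - k) a := by
  rw [Finset.prod_X_add_C_coeff _ a (by simpa using h)]
  simp [esymm]

lemma exists_fn {n : ℕ} (t : Multiset ℝ) (h : Multiset.card t = n) :
    ∃ b : Fin n → ℝ, Multiset.map b Finset.univ.val = t := by
  have hl : t.toList.length = n := by simp [h]
  refine ⟨fun i => t.toList.get (Fin.cast hl.symm i), ?_⟩
  rw [Fin.univ_val_map]
  have : List.ofFn (fun i : Fin n => t.toList.get (Fin.cast hl.symm i)) = t.toList := by
    apply List.ext_get (by simp [hl])
    intro i h1 h2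
    simp
  rw [this, Multiset.coe_toList]

lemma exists_deriv {n : ℕ} (a : Fin (n + 1) → ℝ) :
    ∃ b : Fin n → ℝ, ∀ i : ℕ, i ≤ n →
      ((n : ℝ) + 1) * esymm i b = ((n : ℝ) + 1 - i) * esymm i a := by
  set P : ℝ[X] := ∏ i, (X + C (a i)) with hP
  have hne : ((n : ℝ) + 1) ≠ 0 := by positivity
  have hPm : P.Monic := monic_prod_of_monic _ _ fun i _ => monic_X_add_C _
  have hPdeg : P.natDegree = n + 1 := by
    rw [hP, natDegree_prod _ _ fun i _ => (monic_X_add_C (a i)).ne_zero]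
    simp
  have hPs : P.Splits :=
    Splits.prod fun i _ => Splits.X_add_C _
  have hProots : Multiset.card P.roots = n + 1 := by
    rw [(splits_iff_card_roots).mp hPs, hPdeg]
  set Q : ℝ[X] := derivative P with hQ
  have hQdeg : Q.natDegree ≤ n := by
    show (derivative P).natDegree ≤ n
    have := natDegree_derivative_le P
    omega
  have hQc : n ≤ Multiset.card Q.roots := by
    show n ≤ Multiset.card (derivative P).roots
    have := P.card_roots_le_derivative
    omega
  have hQc' : Multiset.card Q.roots ≤ Q.natDegree := card_roots' Q
  have hQdeg' : Q.natDegree = n := le_antisymm hQdeg (le_trans hQc hQc')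
  have hQcard : Multiset.card Q.roots = n := le_antisymm (hQdeg' ▸ hQc') hQc
  have hQs : Q.Splits := splits_iff_card_roots.mpr (hQcard.trans hQdeg'.symm)
  have hQcoeff : ∀ i : ℕ, i ≤ n → Q.coeff (n - i) = ((n : ℝ) + 1 - i) * esymm i a := by
    intro i hi
    rw [hQ, coeff_derivative]
    have h1 : n - i + 1 = n + 1 - i := by omega
    have h2 : n + 1 - (n + 1 - i) = i := by omega
    rw [h1, esymm_coeff a (by omega), h2]
    have : ((n - i : ℕ) : ℝ) = (n : ℝ) - i := by
      rw [Nat.cast_sub hi]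
    rw [this]; ring
  set R : ℝ[X] := C (((n : ℝ) + 1)⁻¹) * Q with hR
  have hRdeg : R.natDegree = n := by
    rw [hR, natDegree_C_mul (inv_ne_zero hne), hQdeg']
  have hQtop : Q.coeff n = (n : ℝ) + 1 := by
    have := hQcoeff 0 (by omega)
    simpa [esymm] using this
  have hRm : R.Monic := by
    rw [Monic, leadingCoeff, hRdeg, hR, coeff_C_mul, hQtop]
    field_simp
  have hRroots : R.roots = Q.roots := roots_C_mul _ (inv_ne_zero hne)
  have hRs : R.Splits := hQs.C_mul _
  have hRprod : R = (R.roots.map fun r => X - C r).prod :=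
    hRs.eq_prod_roots_of_monic hRm
  obtain ⟨b, hb⟩ := exists_fn (R.roots.map fun r => -r)
    (by rw [Multiset.card_map, hRroots, hQcard])
  refine ⟨b, fun i hi => ?_⟩
  have hprod : ∏ j, (X + C (b j)) = R := by
    have h1 : (Finset.univ.val.map fun j => X + C (b j)) =
        (Finset.univ.val.map b).map fun r => X + C r := by
      rw [Multiset.map_map]; rfl
    have h2 : ((Multiset.map (fun r => -r) R.roots).map fun r => X + C r)
        = Multiset.map (fun r => X - C r) R.roots := by
      rw [Multiset.map_map]
      exact Multiset.map_congr rfl (fun r _ => by simp [sub_eq_add_neg])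
    rw [Finset.prod, h1, hb, h2]
    exact hRprod.symm
  have hcoeffb : esymm i b = R.coeff (n - i) := by
    have := esymm_coeff b (k := n - i) (by omega)
    rw [hprod] at this
    rw [this, Nat.sub_sub_self hi]
  rw [hcoeffb, hR, coeff_C_mul, hQcoeff i hi]
  field_simp

lemma esymm_inv {n : ℕ} (a : Fin n → ℝ) (h : ∀ i, a i ≠ 0) {i : ℕ} (hi : i ≤ n) :
    esymm i (fun j => (a j)⁻¹) * ∏ j, a j = esymm (n - i) a := by
  rw [esymm, esymm, Finset.sum_mul]
  refine Finset.sum_nbij' (fun s => sᶜ) (fun s => sᶜ) ?_ ?_ (by simp) (by simp) ?_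
  · intro s hs
    rw [Finset.mem_powersetCard_univ] at hs ⊢
    rw [Finset.card_compl, hs]
    simp
  · intro s hs
    rw [Finset.mem_powersetCard_univ] at hs ⊢
    rw [Finset.card_compl, hs]
    simp [Nat.sub_sub_self hi]
  · intro s _
    have hs0 : ∏ j ∈ s, a j ≠ 0 := Finset.prod_ne_zero_iff.mpr fun j _ => h j
    have := Finset.prod_compl_mul_prod s a
    rw [Finset.prod_inv_distrib]
    field_simp
    linarith [this]

lemma choose_id (n i : ℕ) (hi : i ≤ n) :
    (n + 1) * n.choose i = (n + 1 - i) * (n + 1).choose i := by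
  rw [← Nat.choose_symm hi, ← Nat.choose_symm (by omega : i ≤ n + 1)]
  have h2 : n + 1 - i = n - i + 1 := by omega
  rw [h2]
  have h := Nat.add_one_mul_choose_eq n (n - i)
  rw [h]
  ring

lemma p_transfer {n : ℕ} (a : Fin (n + 1) → ℝ) :
    ∃ b : Fin n → ℝ, ∀ i : ℕ, i ≤ n →
      esymm i b / (n.choose i : ℝ) = esymm i a / ((n + 1).choose i : ℝ) := by
  obtain ⟨b, hb⟩ := exists_deriv a
  refine ⟨b, fun i hi => ?_⟩
  have h1 := hb i hi
  have hcast : ((n : ℝ) + 1) * (n.choose i : ℝ) = ((n : ℝ) + 1 - i) * ((n + 1).choose i : ℝ) := by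
    have := choose_id n i hi
    have h2 : ((n + 1 - i : ℕ) : ℝ) = (n : ℝ) + 1 - i := by
      rw [Nat.cast_sub (by omega)]
      push_cast; ring
    calc ((n : ℝ) + 1) * (n.choose i : ℝ) = (((n + 1) * n.choose i : ℕ) : ℝ) := by push_cast; ring
      _ = (((n + 1 - i) * (n + 1).choose i : ℕ) : ℝ) := by rw [this]
      _ = ((n : ℝ) + 1 - i) * ((n + 1).choose i : ℝ) := by rw [Nat.cast_mul, h2]
  have hc1 : (0 : ℝ) < (n.choose i : ℝ) := by
    exact_mod_cast Nat.choose_pos hi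
  have hc2 : (0 : ℝ) < ((n + 1).choose i : ℝ) := by
    exact_mod_cast Nat.choose_pos (by omega : i ≤ n + 1)
  rw [div_eq_div_iff hc1.ne' hc2.ne']
  have hne : ((n : ℝ) + 1) ≠ 0 := by positivity
  have : ((n : ℝ) + 1) * (esymm i b * ((n + 1).choose i : ℝ))
      = ((n : ℝ) + 1) * (esymm i a * (n.choose i : ℝ)) := by
    calc ((n : ℝ) + 1) * (esymm i b * ((n + 1).choose i : ℝ))
        = (((n : ℝ) + 1) * esymm i b) * ((n + 1).choose i : ℝ) := by ring
      _ = (((n : ℝ) + 1 - i) * esymm i a) * ((n + 1).choose i : ℝ) := by rw [h1]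
      _ = esymm i a * (((n : ℝ) + 1 - i) * ((n + 1).choose i : ℝ)) := by ring
      _ = esymm i a * (((n : ℝ) + 1) * (n.choose i : ℝ)) := by rw [← hcast]
      _ = ((n : ℝ) + 1) * (esymm i a * (n.choose i : ℝ)) := by ring
  exact mul_left_cancel₀ hne this

lemma newton : ∀ n : ℕ, ∀ a : Fin n → ℝ, ∀ j : ℕ, 1 ≤ j → j + 1 ≤ n →
    esymm (j - 1) a / (n.choose (j - 1) : ℝ) * (esymm (j + 1) a / (n.choose (j + 1) : ℝ))
      ≤ (esymm j a / (n.choose j : ℝ)) ^ 2 := by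
  intro n
  induction n using Nat.strong_induction_on with
  | _ n IH =>
  -- First: the case j = 1 for this n
  have h1 : ∀ a : Fin n → ℝ, 2 ≤ n →
      esymm 0 a / (n.choose 0 : ℝ) * (esymm 2 a / (n.choose 2 : ℝ))
        ≤ (esymm 1 a / (n.choose 1 : ℝ)) ^ 2 := by
    intro a h2n
    rcases eq_or_lt_of_le h2n with heq | hlt
    · -- n = 2
      subst heq
      have e0 := esymm_zero' a
      have e1 := esymm_one' a
      have e2 := esymm_top a
      rw [e0, e1, e2, Fin.sum_univ_two, Fin.prod_univ_two]
      norm_num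
      nlinarith [sq_nonneg (a 0 - a 1)]
    · -- 2 < n : derivative reduction
      obtain ⟨p, rfl⟩ : ∃ p, n = p + 1 := ⟨n - 1, by omega⟩
      obtain ⟨b, hb⟩ := p_transfer a
      rw [← hb 0 (by omega), ← hb 1 (by omega), ← hb 2 (by omega)]
      exact IH p (by omega) b 1 le_rfl (by omega)
  intro a j hj1 hjn
  rcases lt_or_eq_of_le hjn with hlt | hn
  · -- j + 1 < n : derivative reduction
    obtain ⟨p, rfl⟩ : ∃ p, n = p + 1 := ⟨n - 1, by omega⟩
    obtain ⟨b, hb⟩ := p_transfer a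
    rw [← hb (j - 1) (by omega), ← hb j (by omega), ← hb (j + 1) (by omega)]
    exact IH p (by omega) b j hj1 (by omega)
  · -- j + 1 = n
    rcases eq_or_lt_of_le hj1 with hj | hj2
    · have hj' : j = 1 := hj.symm
      subst hj'
      subst hn
      simpa using h1 a (by omega)
    · -- 2 ≤ j, use reciprocals
      subst hn
      by_cases hz : ∀ i, a i ≠ 0
      · set c : Fin (j + 1) → ℝ := fun i => (a i)⁻¹ with hc
        have h1c := h1 c (by omega)
        set Pd : ℝ := ∏ i, a i with hPd
        have hPd0 : Pd ≠ 0 := Finset.prod_ne_zero_iff.mpr fun i _ => hz i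
        have hi1 : esymm 1 c * Pd = esymm j a := by
          have := esymm_inv a hz (i := 1) (by omega)
          simpa using this
        have hi2 : esymm 2 c * Pd = esymm (j - 1) a := by
          have := esymm_inv a hz (i := 2) (by omega)
          have h : j + 1 - 2 = j - 1 := by omega
          rw [h] at this
          simpa using this
        have htop : esymm (j + 1) a = Pd := esymm_top a
        have h0c : esymm 0 c = 1 := esymm_zero' c
        have hsymm1 : ((j + 1).choose j : ℝ) = ((j + 1).choose 1 : ℝ) := by
          have h := Nat.choose_symm (by omega : j ≤ j + 1)
          have h' : j + 1 - j = 1 := by omega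
          rw [h'] at h
          exact_mod_cast h.symm
        have hsymm2 : ((j + 1).choose (j - 1) : ℝ) = ((j + 1).choose 2 : ℝ) := by
          have h := Nat.choose_symm (by omega : j - 1 ≤ j + 1)
          have h' : j + 1 - (j - 1) = 2 := by omega
          rw [h'] at h
          exact_mod_cast h.symm
        have hsymm3 : ((j + 1).choose (j + 1) : ℝ) = 1 := by simp
        rw [hsymm1, hsymm2, hsymm3, htop, ← hi1, ← hi2]
        rw [h0c, Nat.choose_zero_right] at h1c
        norm_num at h1c
        have hch1 : ((j + 1).choose 1 : ℝ) = (j : ℝ) + 1 := by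
          rw [Nat.choose_one_right]; push_cast; ring
        rw [hch1]
        have hstep := mul_le_mul_of_nonneg_right h1c (sq_nonneg Pd)
        calc esymm 2 c * Pd / ((j + 1).choose 2 : ℝ) * (Pd / 1)
            = (esymm 2 c / ((j + 1).choose 2 : ℝ)) * Pd ^ 2 := by ring
          _ ≤ (esymm 1 c / ((j : ℝ) + 1)) ^ 2 * Pd ^ 2 := hstep
          _ = (esymm 1 c * Pd / ((j : ℝ) + 1)) ^ 2 := by ring
      · push_neg at hz
        obtain ⟨i0, hi0⟩ := hz
        have htop : esymm (j + 1) a = 0 := by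
          rw [esymm_top]
          exact Finset.prod_eq_zero (Finset.mem_univ i0) hi0
        rw [htop]
        simp
        positivity

/-- Maclaurin's inequality on the Garding cone `Γ_k`: if `σ_j(λ) > 0` for
`j = 1,…,k` and `1 ≤ m ≤ k`, then
`σ_m(λ)/C(n,m) ≥ (σ_k(λ)/C(n,k))^{m/k}`. -/
theorem stmt15 {n k m : ℕ} (hm1 : 1 ≤ m) (hmk : m ≤ k) (hkn : k ≤ n)
    (lam : Fin n → ℝ) (hΓ : ∀ j, 1 ≤ j → j ≤ k → 0 < esymm j lam) :
    (esymm k lam / (n.choose k : ℝ)) ^ ((m : ℝ) / (k : ℝ))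
      ≤ esymm m lam / (n.choose m : ℝ) := by
  set p : ℕ → ℝ := fun i => esymm i lam / (n.choose i : ℝ) with hp
  have hp0 : p 0 = 1 := by simp [hp, esymm_zero']
  have hppos : ∀ i, i ≤ k → 0 < p i := by
    intro i hik
    rcases Nat.eq_zero_or_pos i with rfl | hi
    · rw [hp0]; norm_num
    · have h1 : 0 < esymm i lam := hΓ i hi hik
      have h2 : (0 : ℝ) < (n.choose i : ℝ) := by
        exact_mod_cast Nat.choose_pos (le_trans hik hkn)
      exact div_pos h1 h2
  set r : ℕ → ℝ := fun i => p (i + 1) / p i with hr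
  have hrpos : ∀ i, i + 1 ≤ k → 0 < r i :=
    fun i hi => div_pos (hppos _ hi) (hppos _ (by omega))
  have hadj : ∀ i, i + 2 ≤ k → r (i + 1) ≤ r i := by
    intro i hi
    have hN := newton n lam (i + 1) (by omega) (by omega)
    have h' : i + 1 - 1 = i := by omega
    rw [h'] at hN
    have hN' : p i * p (i + 2) ≤ p (i + 1) ^ 2 := hN
    have p1 := hppos i (by omega)
    have p2 := hppos (i + 1) (by omega)
    show p (i + 1 + 1) / p (i + 1) ≤ p (i + 1) / p i
    rw [div_le_div_iff₀ p2 p1]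
    calc p (i + 1 + 1) * p i = p i * p (i + 2) := by ring_nf
      _ ≤ p (i + 1) ^ 2 := hN'
      _ = p (i + 1) * p (i + 1) := sq (p (i + 1))
  have hanti : ∀ d i, i + d + 1 ≤ k → r (i + d) ≤ r i := by
    intro d
    induction d with
    | zero => intro i _; exact le_rfl
    | succ d ih =>
      intro i h
      exact le_trans (hadj (i + d) (by omega)) (ih i (by omega))
  have hanti' : ∀ i j, i ≤ j → j + 1 ≤ k → r j ≤ r i := by
    intro i j hij hjk
    have : j = i + (j - i) := by omega
    rw [this]
    exact hanti (j - i) i (by omega)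
  have hprod : ∀ i, i ≤ k → p i = ∏ j ∈ Finset.range i, r j := by
    intro i
    induction i with
    | zero => intro _; simpa using hp0
    | succ i ih =>
      intro h
      rw [Finset.prod_range_succ, ← ih (by omega)]
      have h1 := hppos i (by omega)
      show p (i + 1) = p i * (p (i + 1) / p i)
      field_simp
  have hpm := hppos m hmk
  have hpk := hppos k le_rfl
  set ρ : ℝ := r (m - 1) with hρ
  have hρpos : 0 < ρ := hrpos (m - 1) (by omega)
  have hBsub : Finset.range k = Finset.range m ∪ Finset.Ico m k := by
    simp only [Finset.range_eq_Ico]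
    rw [Finset.Ico_union_Ico_eq_Ico (by omega) hmk]
  have hdisj : Disjoint (Finset.range m) (Finset.Ico m k) := by
    rw [Finset.range_eq_Ico]
    exact Finset.Ico_disjoint_Ico_consecutive 0 m k
  have hsplit : p k = p m * ∏ j ∈ Finset.Ico m k, r j := by
    rw [hprod k le_rfl, hprod m hmk, hBsub, Finset.prod_union hdisj]
  set B : ℝ := ∏ j ∈ Finset.Ico m k, r j with hB
  have hBpos : 0 < B := Finset.prod_pos fun j hj => by
    rw [Finset.mem_Ico] at hj
    exact hrpos j (by omega)
  have hBle : B ≤ ρ ^ (k - m) := by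
    have : ρ ^ (k - m) = ∏ _j ∈ Finset.Ico m k, ρ := by
      rw [Finset.prod_const, Nat.card_Ico]
    rw [this]
    refine Finset.prod_le_prod (fun j hj => ?_) (fun j hj => ?_)
    · rw [Finset.mem_Ico] at hj
      exact (hrpos j (by omega)).le
    · rw [Finset.mem_Ico] at hj
      exact hanti' (m - 1) j (by omega) (by omega)
  have hρle : ρ ^ m ≤ p m := by
    have h1 : ρ ^ m = ∏ _j ∈ Finset.range m, ρ := by
      rw [Finset.prod_const, Finset.card_range]
    rw [h1, hprod m hmk]
    refine Finset.prod_le_prod (fun j _ => hρpos.le) (fun j hj => ?_)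
    rw [Finset.mem_range] at hj
    exact hanti' j (m - 1) (by omega) (by omega)
  have hkey : p k ^ m ≤ p m ^ k := by
    calc p k ^ m = p m ^ m * B ^ m := by rw [hsplit]; ring
      _ ≤ p m ^ m * (ρ ^ (k - m)) ^ m := by
          refine mul_le_mul_of_nonneg_left (pow_le_pow_left₀ hBpos.le hBle m) ?_
          positivity
      _ = p m ^ m * (ρ ^ m) ^ (k - m) := by rw [← pow_mul, ← pow_mul, Nat.mul_comm]
      _ ≤ p m ^ m * (p m) ^ (k - m) := by
          refine mul_le_mul_of_nonneg_left (pow_le_pow_left₀ (by positivity) hρle _) ?_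
          positivity
      _ = p m ^ k := by rw [← pow_add]; congr 1; omega
  have hk0 : (k : ℝ) ≠ 0 := Nat.cast_ne_zero.mpr (by omega)
  have h2 : (p k ^ ((m : ℝ) / (k : ℝ))) ^ k ≤ p m ^ k := by
    have h3 : (p k ^ ((m : ℝ) / (k : ℝ))) ^ k = p k ^ m := by
      rw [← Real.rpow_natCast (p k ^ ((m : ℝ) / (k : ℝ))) k, ← Real.rpow_mul hpk.le,
        div_mul_cancel₀ _ hk0, Real.rpow_natCast]
    rw [h3]
    exact hkey
  exact le_of_pow_le_pow_left₀ (by omega) hpm.le h2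
end
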